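/- For an operator T : E → F between Banach lattices, the following are equivalent: (1) T is order L-weakly compact; (2) for every Banach space X and every strong order bounded operator S : X → E, the composition T ∘ S is L-weakly compact; (3) for every strong order bounded operator S : ℓ¹ → E, the composition T ∘ S is L-weakly compact. -/

import Mathlib

open Filter Topology NormedSpace

open Filter Topology

section Defs

/-- A sequence in a lattice ordered group is pairwise disjoint. -/
def DisjSeq {G : Type*} [Lattice G] [AddCommGroup G] (y : ℕ → G) : Prop :=
  ∀ m n : ℕ, m ≠ n → |y m| ⊓ |y n| = 0

/-- The solid hull of a set. -/
def SolidHull {G : Type*} [Lattice G] [AddCommGroup G] (A : Set G) : Set G :=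
  {z | ∃ a ∈ A, |z| ≤ |a|}

/-- A sequence is order bounded. -/
def OrdBddSeq {G : Type*} [Preorder G] (y : ℕ → G) : Prop :=
  ∃ a b : G, ∀ n, a ≤ y n ∧ y n ≤ b

/-- A set is L-weakly compact: every disjoint sequence in its solid hull is norm null. -/
def LWCompactSet {G : Type*} [NormedAddCommGroup G] [Lattice G] (A : Set G) : Prop :=
  ∀ y : ℕ → G, (∀ n, y n ∈ SolidHull A) → DisjSeq y →
    Tendsto (fun n => ‖y n‖) atTop (𝓝 0)

/-- An operator is order L-weakly compact. -/
def OrderLWC {G H : Type*} [NormedAddCommGroup G] [Lattice G] [NormedSpace ℝ G]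
    [NormedAddCommGroup H] [Lattice H] [NormedSpace ℝ H] (T : G →L[ℝ] H) : Prop :=
  ∀ x : G, 0 ≤ x → LWCompactSet (T '' Set.Icc 0 x)

/-- An operator is L-weakly compact. -/
def LWC {X H : Type*} [NormedAddCommGroup X] [NormedSpace ℝ X]
    [NormedAddCommGroup H] [Lattice H] [NormedSpace ℝ H] (T : X →L[ℝ] H) : Prop :=
  LWCompactSet (T '' Metric.closedBall 0 1)

/-- An operator is M-weakly compact. -/
def MWC {G Y : Type*} [NormedAddCommGroup G] [Lattice G] [NormedSpace ℝ G]
    [NormedAddCommGroup Y] [NormedSpace ℝ Y] (T : G →L[ℝ] Y) : Prop :=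
  ∀ x : ℕ → G, (∃ C, ∀ n, ‖x n‖ ≤ C) → DisjSeq x →
    Tendsto (fun n => ‖T (x n)‖) atTop (𝓝 0)

/-- An operator is order M-weakly compact. -/
def OrderMWC {G H : Type*} [NormedAddCommGroup G] [Lattice G] [NormedSpace ℝ G]
    [NormedAddCommGroup H] [NormedSpace ℝ H] [Lattice (StrongDual ℝ H)]
    (T : G →L[ℝ] H) : Prop :=
  ∀ x : ℕ → G, (∀ n, ‖x n‖ ≤ 1) → DisjSeq x →
    ∀ f : ℕ → StrongDual ℝ H, OrdBddSeq f →
      Tendsto (fun n => f n (T (x n))) atTop (𝓝 0)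

/-- The norm is order continuous: every decreasing net with infimum `0` is norm null. -/
def OrderContinuousNorm (G : Type*) [NormedAddCommGroup G] [Lattice G] : Prop :=
  ∀ (ι : Type*) [Preorder ι] [Nonempty ι] [IsDirected ι (· ≤ ·)] (x : ι → G),
    Antitone x → IsGLB (Set.range x) 0 → Tendsto (fun i => ‖x i‖) atTop (𝓝 0)

/-- An operator between Banach lattices is order bounded. -/
def OrderBoundedOp {G H : Type*} [NormedAddCommGroup G] [Lattice G] [NormedSpace ℝ G]
    [NormedAddCommGroup H] [Lattice H] [NormedSpace ℝ H] (T : G →L[ℝ] H) : Prop :=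
  ∀ a b : G, ∃ c d : H, ∀ x : G, a ≤ x → x ≤ b → c ≤ T x ∧ T x ≤ d

/-- An operator into a Banach lattice is strong order bounded. -/
def StrongOrderBounded {X H : Type*} [NormedAddCommGroup X] [NormedSpace ℝ X]
    [NormedAddCommGroup H] [Lattice H] [NormedSpace ℝ H] (T : X →L[ℝ] H) : Prop :=
  ∃ a b : H, ∀ x : X, ‖x‖ ≤ 1 → a ≤ T x ∧ T x ≤ b

end Defs

/-!
A solid norm ties the reals to the order: the positive cone is closed and stable under dyadic
multiples, hence under all positive multiples, so `E` is an ordered `ℝ`-module.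

(1) ⇒ (2): if `a ≤ S x ≤ b` on the unit ball, then `S x = (S x - a) - (-a)` with both terms in
`[0, b - a]`, so `T S` maps the ball into `T[0, b - a] - T[0, b - a]`; by the Riesz decomposition
property, differences of L-weakly compact sets are L-weakly compact.

(3) ⇒ (1): a disjoint sequence in the solid hull of `T[0, x]` is dominated by `T zₙ` with
`zₙ ∈ [0, x]`, and `α ↦ ∑ αₙ zₙ` is a strong order bounded operator `ℓ¹ → E`, mapping the unit ball
into `[-x, x]` and `eₙ` to `zₙ`.

(2) ⇒ (3) is the case `X = ℓ¹`.
-/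

section OrderedModule

lemma nonneg_of_two_pow_nsmul_nonneg {G : Type*} [Lattice G] [AddCommGroup G]
    [IsOrderedAddMonoid G] {w : G} : ∀ k : ℕ, 0 ≤ 2 ^ k • w → 0 ≤ w
  | 0, h => by simpa using h
  | k + 1, h => nonneg_of_two_pow_nsmul_nonneg k <| nsmul_two_semiclosed <| by
      rwa [← mul_nsmul, ← pow_succ]

variable {G : Type*} [NormedAddCommGroup G] [Lattice G] [IsOrderedAddMonoid G] [HasSolidNorm G]
  [NormedSpace ℝ G]

lemma HasSolidNorm.smul_nonneg {c : ℝ} (hc : 0 ≤ c) {z : G} (hz : 0 ≤ z) : 0 ≤ c • z := by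
  have hdyadic : ∀ k : ℕ, 0 ≤ ((⌊c * 2 ^ k⌋₊ : ℝ) / 2 ^ k) • z := fun k =>
    nonneg_of_two_pow_nsmul_nonneg k <| by
      rw [← Nat.cast_smul_eq_nsmul ℝ, smul_smul, Nat.cast_pow, Nat.cast_ofNat,
        mul_div_cancel₀ _ (by positivity), Nat.cast_smul_eq_nsmul]
      exact nsmul_nonneg hz _
  have hlim : Tendsto (fun k : ℕ => ((⌊c * 2 ^ k⌋₊ : ℝ) / 2 ^ k) • z) atTop (𝓝 (c • z)) :=
    ((tendsto_nat_floor_mul_div_atTop hc).comp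
      (tendsto_pow_atTop_atTop_of_one_lt one_lt_two)).smul_const z
  exact ge_of_tendsto hlim (Eventually.of_forall hdyadic)

instance HasSolidNorm.isOrderedModule : IsOrderedModule ℝ G :=
  .of_smul_nonneg fun _ hc _ hz => HasSolidNorm.smul_nonneg hc hz

lemma smul_mem_Icc_of_mem_Icc (c : ℝ) {z x : G} (hz : z ∈ Set.Icc 0 x) :
    c • z ∈ Set.Icc (-(|c| • x)) (|c| • x) := by
  have hle : ∀ d : ℝ, d • z ≤ |d| • x := fun d =>
    (smul_le_smul_of_nonneg_right (le_abs_self d) hz.1).trans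
      (smul_le_smul_of_nonneg_left hz.2 (abs_nonneg d))
  refine ⟨neg_le.1 ?_, hle c⟩
  simpa [neg_smul] using hle (-c)

end OrderedModule

section LWCompactSet

open scoped Pointwise

lemma DisjSeq.of_abs_le {G : Type*} [Lattice G] [AddCommGroup G] [IsOrderedAddMonoid G]
    {y u : ℕ → G} (hy : DisjSeq y) (hu : ∀ n, |u n| ≤ |y n|) : DisjSeq u := fun m n hmn =>
  le_antisymm ((inf_le_inf (hu m) (hu n)).trans_eq (hy m n hmn))
    (le_inf (abs_nonneg _) (abs_nonneg _))

lemma exists_add_eq_of_le_add {G : Type*} [Lattice G] [AddCommGroup G] [IsOrderedAddMonoid G]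
    {x a b : G} (hx : 0 ≤ x) (ha : 0 ≤ a) (hb : 0 ≤ b) (hxab : x ≤ a + b) :
    ∃ u v, u + v = x ∧ u ∈ Set.Icc 0 a ∧ v ∈ Set.Icc 0 b := by
  refine ⟨x ⊓ a, x - x ⊓ a, add_sub_cancel _ _, ⟨le_inf hx ha, inf_le_right⟩,
    sub_nonneg.2 inf_le_left, ?_⟩
  rw [sub_inf, sub_self]
  exact sup_le hb (sub_le_iff_le_add'.2 hxab)

variable {G : Type*} [NormedAddCommGroup G] [Lattice G]

lemma LWCompactSet.of_subset_solidHull {A B : Set G} (hB : LWCompactSet B)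
    (hAB : A ⊆ SolidHull B) : LWCompactSet A := by
  intro y hy hd
  refine hB y (fun n => ?_) hd
  obtain ⟨a, ha, hya⟩ := hy n
  obtain ⟨b, hb, hab⟩ := hAB ha
  exact ⟨b, hb, hya.trans hab⟩

variable [IsOrderedAddMonoid G] [HasSolidNorm G]

lemma LWCompactSet.sub {A B : Set G} (hA : LWCompactSet A) (hB : LWCompactSet B) :
    LWCompactSet (A - B) := by
  intro y hy hd
  have hsplit : ∀ n, ∃ a ∈ A, ∃ b ∈ B, ∃ u v, u + v = |y n| ∧ u ∈ Set.Icc 0 |a| ∧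
      v ∈ Set.Icc 0 |b| := by
    intro n
    obtain ⟨_, ⟨a, ha, b, hb, rfl⟩, hy⟩ := hy n
    have hyab : |y n| ≤ |a| + |b| :=
      hy.trans <| by simpa [sub_eq_add_neg] using abs_add_le a (-b)
    exact ⟨a, ha, b, hb,
      exists_add_eq_of_le_add (abs_nonneg _) (abs_nonneg _) (abs_nonneg _) hyab⟩
  choose a ha b hb u v huv hu hv using hsplit
  have hu_le : ∀ n, |u n| ≤ |y n| := fun n => by
    rw [← huv, abs_of_nonneg (hu n).1]
    exact le_add_of_nonneg_right (hv n).1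
  have hv_le : ∀ n, |v n| ≤ |y n| := fun n => by
    rw [← huv, abs_of_nonneg (hv n).1]
    exact le_add_of_nonneg_left (hu n).1
  have hu0 := hA u (fun n => ⟨a n, ha n, (abs_of_nonneg (hu n).1).trans_le (hu n).2⟩)
    (hd.of_abs_le hu_le)
  have hv0 := hB v (fun n => ⟨b n, hb n, (abs_of_nonneg (hv n).1).trans_le (hv n).2⟩)
    (hd.of_abs_le hv_le)
  refine squeeze_zero (fun n => norm_nonneg _) (fun n => ?_) (by simpa using hu0.add hv0)
  rw [← norm_abs_eq_norm, ← huv]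
  exact norm_add_le _ _

end LWCompactSet

section Operators

variable {X Y E F : Type*} [NormedAddCommGroup X] [NormedSpace ℝ X]
  [NormedAddCommGroup Y] [NormedSpace ℝ Y]
  [NormedAddCommGroup E] [Lattice E] [NormedSpace ℝ E]
  [NormedAddCommGroup F] [Lattice F] [NormedSpace ℝ F]

lemma StrongOrderBounded.comp_linearIsometry {S : X →L[ℝ] E} (hS : StrongOrderBounded S)
    (f : Y →ₗᵢ[ℝ] X) : StrongOrderBounded (S.comp f.toContinuousLinearMap) := by
  obtain ⟨a, b, hab⟩ := hS
  exact ⟨a, b, fun y hy => hab (f y) (by simpa using hy)⟩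

lemma lwc_comp_linearIsometryEquiv_iff (R : X →L[ℝ] F) (e : Y ≃ₗᵢ[ℝ] X) :
    LWC (R.comp e.toLinearIsometry.toContinuousLinearMap) ↔ LWC R := by
  unfold LWC
  rw [ContinuousLinearMap.coe_comp, Set.image_comp]
  simp [LinearIsometryEquiv.image_closedBall]

theorem OrderLWC.lwc_comp [IsOrderedAddMonoid E] [IsOrderedAddMonoid F] [HasSolidNorm F]
    {T : E →L[ℝ] F} (hT : OrderLWC T) {S : X →L[ℝ] E} (hS : StrongOrderBounded S) :
    LWC (T.comp S) := by
  obtain ⟨a, b, hab⟩ := hS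
  have ha : a ≤ 0 := by simpa using (hab 0 (by simp)).1
  have hb : 0 ≤ b := by simpa using (hab 0 (by simp)).2
  have hK := hT (b - a) (sub_nonneg.2 (ha.trans hb))
  refine (hK.sub hK).of_subset_solidHull ?_
  rintro _ ⟨x, hx, rfl⟩
  obtain ⟨hax, hxb⟩ := hab x (by simpa using hx)
  refine ⟨T (S x - a) - T (-a), Set.sub_mem_sub
    ⟨S x - a, ⟨sub_nonneg.2 hax, sub_le_sub_right hxb a⟩, rfl⟩
    ⟨-a, ⟨neg_nonneg.2 ha, by simpa using hb⟩, rfl⟩, by simp⟩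

end Operators

section LpOneSeries

lemma lp.hasSum_norm_of_one {ι : Type*} {E : ι → Type*} [∀ i, NormedAddCommGroup (E i)]
    (f : lp E 1) : HasSum (fun i => ‖f i‖) ‖f‖ := by
  simpa using lp.hasSum_norm (p := 1) (by norm_num) f

variable {ι E : Type*} [NormedAddCommGroup E] [NormedSpace ℝ E] {z : ι → E} {C : ℝ}

lemma summable_norm_smul_of_norm_le (hz : ∀ i, ‖z i‖ ≤ C) (α : lp (fun _ : ι => ℝ) 1) :
    Summable fun i => ‖α i • z i‖ :=
  .of_nonneg_of_le (fun _ => norm_nonneg _)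
    (fun i => (norm_smul _ _).trans_le (mul_le_mul_of_nonneg_left (hz i) (norm_nonneg _)))
    ((lp.hasSum_norm_of_one α).summable.mul_right C)

variable [CompleteSpace E]

noncomputable def lpOneSeries (z : ι → E) (C : ℝ) (hz : ∀ i, ‖z i‖ ≤ C) :
    lp (fun _ : ι => ℝ) 1 →L[ℝ] E :=
  LinearMap.mkContinuous
    { toFun := fun α => ∑' i, α i • z i
      map_add' := fun α β => by
        simp only [lp.coeFn_add, Pi.add_apply, add_smul]
        exact (summable_norm_smul_of_norm_le hz α).of_norm.tsum_add
          (summable_norm_smul_of_norm_le hz β).of_norm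
      map_smul' := fun c α => by
        simp only [lp.coeFn_smul, Pi.smul_apply, smul_eq_mul, mul_smul, RingHom.id_apply]
        exact (summable_norm_smul_of_norm_le hz α).of_norm.tsum_const_smul c }
    C fun α => calc
      ‖∑' i, α i • z i‖ ≤ ∑' i, ‖α i • z i‖ :=
        norm_tsum_le_tsum_norm (summable_norm_smul_of_norm_le hz α)
      _ ≤ ∑' i, ‖α i‖ * C := by
        refine (summable_norm_smul_of_norm_le hz α).tsum_le_tsum (fun i => ?_)
          ((lp.hasSum_norm_of_one α).summable.mul_right C)
        exact (norm_smul _ _).trans_le (mul_le_mul_of_nonneg_left (hz i) (norm_nonneg _))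
      _ = C * ‖α‖ := by rw [(lp.hasSum_norm_of_one α).summable.tsum_mul_right,
          (lp.hasSum_norm_of_one α).tsum_eq, mul_comm]

variable (hz : ∀ i, ‖z i‖ ≤ C)

lemma lpOneSeries_apply (α : lp (fun _ : ι => ℝ) 1) :
    lpOneSeries z C hz α = ∑' i, α i • z i := rfl

lemma lpOneSeries_single [DecidableEq ι] (i : ι) :
    lpOneSeries z C hz (lp.single 1 i 1) = z i := by
  rw [lpOneSeries_apply, tsum_eq_single i fun j hj => by simp [Pi.single_eq_of_ne hj]]
  simp

lemma strongOrderBounded_lpOneSeries [Lattice E] [IsOrderedAddMonoid E] [HasSolidNorm E]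
    {x : E} (hx : 0 ≤ x) (hzx : ∀ i, z i ∈ Set.Icc 0 x) :
    StrongOrderBounded (lpOneSeries z C hz) := by
  refine ⟨-x, x, fun α hα => ?_⟩
  have hpartial : ∀ s : Finset ι, ∑ i ∈ s, α i • z i ∈ Set.Icc (-x) x := fun s => by
    have hs : ∑ i ∈ s, |α i| ≤ 1 := by
      refine ((lp.hasSum_norm_of_one α).summable.sum_le_tsum s fun _ _ => norm_nonneg _).trans ?_
      rw [(lp.hasSum_norm_of_one α).tsum_eq]
      exact hα
    have hsx : (∑ i ∈ s, |α i|) • x ≤ x :=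
      (smul_le_smul_of_nonneg_right hs hx).trans_eq (one_smul ℝ x)
    constructor
    · refine (neg_le_neg hsx).trans ?_
      rw [Finset.sum_smul, ← Finset.sum_neg_distrib]
      exact Finset.sum_le_sum fun i _ => (smul_mem_Icc_of_mem_Icc (α i) (hzx i)).1
    · refine le_trans ?_ hsx
      rw [Finset.sum_smul]
      exact Finset.sum_le_sum fun i _ => (smul_mem_Icc_of_mem_Icc (α i) (hzx i)).2
  exact isClosed_Icc.mem_of_tendsto (summable_norm_smul_of_norm_le hz α).of_norm.hasSum
    (Eventually.of_forall hpartial)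

end LpOneSeries

theorem OrderLWC.of_lwc_comp_lp_one {E F : Type*} [NormedAddCommGroup E] [Lattice E]
    [IsOrderedAddMonoid E] [HasSolidNorm E] [NormedSpace ℝ E] [CompleteSpace E]
    [NormedAddCommGroup F] [Lattice F] [NormedSpace ℝ F] {T : E →L[ℝ] F}
    (h : ∀ S : lp (fun _ : ℕ => ℝ) 1 →L[ℝ] E, StrongOrderBounded S → LWC (T.comp S)) :
    OrderLWC T := by
  intro x hx y hy hd
  choose w hw hyw using hy
  choose z hz hTz using hw
  have hzx : ∀ n, ‖z n‖ ≤ ‖x‖ := fun n => norm_le_norm_of_abs_le_abs <| by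
    rw [abs_of_nonneg (hz n).1, abs_of_nonneg hx]
    exact (hz n).2
  refine h _ (strongOrderBounded_lpOneSeries hzx hx hz) y (fun n => ?_) hd
  refine ⟨w n, ⟨lp.single 1 n 1, ?_, ?_⟩, hyw n⟩
  · simp [lp.norm_single]
  · simp [lpOneSeries_single, hTz]

theorem stmt15_general {E F : Type*} [NormedAddCommGroup E] [Lattice E] [IsOrderedAddMonoid E] [HasSolidNorm E] [NormedSpace ℝ E] [CompleteSpace E]
    [NormedAddCommGroup F] [Lattice F] [IsOrderedAddMonoid F] [HasSolidNorm F] [NormedSpace ℝ F]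
    (T : E →L[ℝ] F) :
    (OrderLWC T ↔
      ∀ (X : Type*) [NormedAddCommGroup X] [NormedSpace ℝ X] [CompleteSpace X]
        (S : X →L[ℝ] E), StrongOrderBounded S → LWC (T.comp S)) ∧
    (OrderLWC T ↔
      ∀ S : lp (fun _ : ℕ => ℝ) 1 →L[ℝ] E, StrongOrderBounded S → LWC (T.comp S)) := by
  refine ⟨⟨fun hT _ _ _ _ _ hS => hT.lwc_comp hS,
      fun h => OrderLWC.of_lwc_comp_lp_one fun S hS => ?_⟩,
    ⟨fun hT _ hS => hT.lwc_comp hS, OrderLWC.of_lwc_comp_lp_one⟩⟩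
  -- `X` lives in an arbitrary universe, so `ℓ¹` enters (2) through `ULift`.
  let e := LinearIsometryEquiv.ulift ℝ (lp (fun _ : ℕ => ℝ) 1)
  exact (lwc_comp_linearIsometryEquiv_iff (T.comp S) e).1
    (h _ _ (hS.comp_linearIsometry e.toLinearIsometry))

theorem stmt15 {E F : Type*} [NormedAddCommGroup E] [Lattice E] [IsOrderedAddMonoid E] [HasSolidNorm E] [NormedSpace ℝ E] [CompleteSpace E]
    [NormedAddCommGroup F] [Lattice F] [IsOrderedAddMonoid F] [HasSolidNorm F] [NormedSpace ℝ F] [CompleteSpace F]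
    (T : E →L[ℝ] F) :
    (OrderLWC T ↔
      ∀ (X : Type*) [NormedAddCommGroup X] [NormedSpace ℝ X] [CompleteSpace X]
        (S : X →L[ℝ] E), StrongOrderBounded S → LWC (T.comp S)) ∧
    (OrderLWC T ↔
      ∀ S : lp (fun _ : ℕ => ℝ) 1 →L[ℝ] E, StrongOrderBounded S → LWC (T.comp S)) :=
  stmt15_general T
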